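/- The Gaussian mechanism A(G) = f(G) + N(0, σ²I) applied to a function f with ℓ2 sensitivity Δ satisfies (α, α·Δ²/(2σ²))-Rényi differential privacy for every α > 1. -/

import Mathlib

open MeasureTheory ProbabilityTheory Real
open scoped ENNReal NNReal

noncomputable def renyiDiv {Ω : Type*} [MeasurableSpace Ω] (α : ℝ)
    (P Q : Measure Ω) : ℝ :=
  (1 / (α - 1)) * Real.log (∫ x, (P.rnDeriv Q x).toReal ^ α ∂Q)

/-- The Gaussian mechanism `A(x) = f(x) + N(0, σ²I)`, represented by the
product of coordinatewise Gaussians centered at `f x`. -/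
noncomputable def gaussianMechanism {G : Type*} {r : ℕ}
    (f : G → EuclideanSpace ℝ (Fin r)) (σ : ℝ) (x : G) :
    Measure (Fin r → ℝ) :=
  Measure.pi (fun i => gaussianReal (f x i) (Real.toNNReal (σ ^ 2)))

lemma lintegral_pi_prod' {n : ℕ} {E : Fin n → Type*} [∀ i, MeasurableSpace (E i)]
    (μ : ∀ i, Measure (E i)) [∀ i, SigmaFinite (μ i)] (h : ∀ i, E i → ℝ≥0∞)
    (hm : ∀ i, Measurable (h i)) :
    ∫⁻ a, ∏ i, h i (a i) ∂Measure.pi μ = ∏ i, ∫⁻ t, h i t ∂μ i := by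
  induction n with
  | zero => simp
  | succ n ih =>
    have hmp := (measurePreserving_piFinSuccAbove μ 0).symm
    rw [← hmp.lintegral_comp (f := fun a => ∏ i, h i (a i))
      (Finset.measurable_prod _ fun i _ => (hm i).comp (measurable_pi_apply i))]
    simp_rw [MeasurableEquiv.piFinSuccAbove_symm_apply, Fin.insertNthEquiv,
      Fin.prod_univ_succ, Fin.insertNth_zero, Equiv.coe_fn_mk, Fin.cons_succ, Fin.cons_zero,
      Fin.zero_succAbove]
    exact (lintegral_prod_mul (μ := μ 0) (ν := Measure.pi fun j => μ j.succ) (f := h 0)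
      (g := fun a : ((i : Fin n) → E i.succ) => ∏ i : Fin n, h i.succ (a i)) (hm 0).aemeasurable
      ((Finset.measurable_prod _ fun i _ => ((hm i.succ).comp (measurable_pi_apply i))).aemeasurable)).trans
      (by rw [ih (fun j => μ j.succ) (fun j => h j.succ) (fun j => hm j.succ)])

lemma pi_gaussian_eq {n : ℕ} (m : Fin n → ℝ) {v : ℝ≥0} (hv : v ≠ 0) :
    Measure.pi (fun i => gaussianReal (m i) v)
      = (Measure.pi fun _ : Fin n => (volume : Measure ℝ)).withDensity
          (fun a => ∏ i, gaussianPDF (m i) v (a i)) := by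
  refine Measure.pi_eq fun s hs => ?_
  rw [withDensity_apply _ (MeasurableSet.univ_pi hs),
    ← lintegral_indicator (MeasurableSet.univ_pi hs)]
  have heq : ∀ a : Fin n → ℝ, (Set.univ.pi s).indicator
      (fun a => ∏ i, gaussianPDF (m i) v (a i)) a
      = ∏ i, (s i).indicator (gaussianPDF (m i) v) (a i) := by
    intro a
    by_cases ha : a ∈ Set.univ.pi s
    · rw [Set.indicator_of_mem ha]
      exact Finset.prod_congr rfl fun i _ =>
        (Set.indicator_of_mem (ha i (Set.mem_univ i)) _).symm
    · rw [Set.indicator_of_notMem ha]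
      simp only [Set.mem_pi, Set.mem_univ, forall_true_left, not_forall] at ha
      obtain ⟨i, hi⟩ := ha
      exact (Finset.prod_eq_zero (Finset.mem_univ i)
        (by simpa using Set.indicator_of_notMem (by simpa using hi) _)).symm
  simp_rw [heq]
  rw [lintegral_pi_prod' _ _ (fun i => (measurable_gaussianPDF _ _).indicator (hs i))]
  refine Finset.prod_congr rfl fun i _ => ?_
  rw [lintegral_indicator (hs i), ← gaussianReal_apply _ hv]

lemma one_dim_renyi (α : ℝ) (μ₁ μ₂ : ℝ) {v : ℝ≥0} (hv : v ≠ 0) :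
    ∫ t, (gaussianPDFReal μ₁ v t / gaussianPDFReal μ₂ v t) ^ α * gaussianPDFReal μ₂ v t
      = Real.exp (α * (α - 1) * (μ₁ - μ₂) ^ 2 / (2 * v)) := by
  have hvpos : (0 : ℝ) < (v : ℝ) := by
    exact lt_of_le_of_ne v.coe_nonneg (Ne.symm (NNReal.coe_ne_zero.mpr hv))
  have key : ∀ t : ℝ, (gaussianPDFReal μ₁ v t / gaussianPDFReal μ₂ v t) ^ α
        * gaussianPDFReal μ₂ v t
      = Real.exp (α * (α - 1) * (μ₁ - μ₂) ^ 2 / (2 * v))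
        * gaussianPDFReal (α * μ₁ - (α - 1) * μ₂) v t := by
    intro t
    unfold gaussianPDFReal
    have hc : (0 : ℝ) < (√(2 * π * v))⁻¹ := by positivity
    rw [mul_div_mul_left _ _ hc.ne', ← Real.exp_sub,
      Real.rpow_def_of_pos (Real.exp_pos _), Real.log_exp]
    have hexp : (-(t - μ₁) ^ 2 / (2 * (v:ℝ)) - -(t - μ₂) ^ 2 / (2 * (v:ℝ))) * α
          + -(t - μ₂) ^ 2 / (2 * (v:ℝ))
        = α * (α - 1) * (μ₁ - μ₂) ^ 2 / (2 * (v:ℝ))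
          + -(t - (α * μ₁ - (α - 1) * μ₂)) ^ 2 / (2 * (v:ℝ)) := by
      field_simp
      ring
    calc rexp ((-(t - μ₁) ^ 2 / (2 * (v:ℝ)) - -(t - μ₂) ^ 2 / (2 * (v:ℝ))) * α)
          * ((√(2 * π * ↑v))⁻¹ * rexp (-(t - μ₂) ^ 2 / (2 * (v:ℝ))))
        = (√(2 * π * ↑v))⁻¹ * rexp ((-(t - μ₁) ^ 2 / (2 * (v:ℝ)) - -(t - μ₂) ^ 2 / (2 * (v:ℝ))) * α
            + -(t - μ₂) ^ 2 / (2 * (v:ℝ))) := by rw [Real.exp_add]; ring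
      _ = (√(2 * π * ↑v))⁻¹ * rexp (α * (α - 1) * (μ₁ - μ₂) ^ 2 / (2 * (v:ℝ))
            + -(t - (α * μ₁ - (α - 1) * μ₂)) ^ 2 / (2 * (v:ℝ))) := by rw [hexp]
      _ = rexp (α * (α - 1) * (μ₁ - μ₂) ^ 2 / (2 * (v:ℝ)))
            * ((√(2 * π * ↑v))⁻¹ * rexp (-(t - (α * μ₁ - (α - 1) * μ₂)) ^ 2 / (2 * (v:ℝ)))) := by
          rw [Real.exp_add]; ring
  simp_rw [key]
  rw [integral_const_mul, integral_gaussianPDFReal_eq_one _ hv, mul_one]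

/-- The Gaussian mechanism with ℓ2-sensitivity `Δ` satisfies
`(α, α·Δ²/(2σ²))`-RDP for every `α > 1`. -/
theorem gaussian_mechanism_rdp {G : Type*} {r : ℕ}
    (Neighbor : G → G → Prop) (f : G → EuclideanSpace ℝ (Fin r))
    (σ Δ : ℝ) (hσ : 0 < σ)
    (hΔ : ∀ x y, Neighbor x y → ‖f x - f y‖ ≤ Δ) :
    ∀ α : ℝ, 1 < α → ∀ x y, Neighbor x y →
      renyiDiv α (gaussianMechanism f σ x) (gaussianMechanism f σ y) ≤
        α * Δ ^ 2 / (2 * σ ^ 2) := by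
  intro α hα x y hxy
  have hσ2 : (0:ℝ) < σ ^ 2 := by positivity
  set v : ℝ≥0 := Real.toNNReal (σ ^ 2) with hv_def
  have hv : v ≠ 0 := by
    rw [hv_def, ne_eq, Real.toNNReal_eq_zero, not_le]; exact hσ2
  have hvR : (v : ℝ) = σ ^ 2 := Real.coe_toNNReal _ hσ2.le
  set volpi := (Measure.pi fun _ : Fin r => (volume : Measure ℝ)) with hvolpi
  set dP : (Fin r → ℝ) → ℝ≥0∞ := fun a => ∏ i, gaussianPDF (f x i) v (a i) with hdP
  set dQ : (Fin r → ℝ) → ℝ≥0∞ := fun a => ∏ i, gaussianPDF (f y i) v (a i) with hdQ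
  have hmdP : Measurable dP :=
    Finset.measurable_prod _ fun i _ => (measurable_gaussianPDF _ _).comp (measurable_pi_apply i)
  have hmdQ : Measurable dQ :=
    Finset.measurable_prod _ fun i _ => (measurable_gaussianPDF _ _).comp (measurable_pi_apply i)
  have hP : gaussianMechanism f σ x = volpi.withDensity dP := pi_gaussian_eq _ hv
  have hQ : gaussianMechanism f σ y = volpi.withDensity dQ := pi_gaussian_eq _ hv
  set g : (Fin r → ℝ) → ℝ≥0∞ := fun a => dP a / dQ a with hg_def
  have hmg : Measurable g := hmdP.div hmdQ
  have hdQ0 : ∀ a, dQ a ≠ 0 := by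
    intro a
    rw [hdQ, Finset.prod_ne_zero_iff]
    exact fun i _ => (gaussianPDF_pos _ hv _).ne'
  have hdQtop : ∀ a, dQ a ≠ ∞ := by
    intro a
    rw [hdQ]
    exact (ENNReal.prod_lt_top fun i _ => ENNReal.ofReal_lt_top).ne
  have hQg : (gaussianMechanism f σ y).withDensity g = gaussianMechanism f σ x := by
    rw [hQ, ← withDensity_mul _ hmdQ hmg, hP]
    congr 1
    funext a
    exact ENNReal.mul_div_cancel (hdQ0 a) (hdQtop a)
  have hsf : SigmaFinite (gaussianMechanism f σ y) := by
    unfold gaussianMechanism; infer_instance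
  have hrn : (gaussianMechanism f σ x).rnDeriv (gaussianMechanism f σ y)
      =ᵐ[gaussianMechanism f σ y] g := by
    conv_lhs => rw [← hQg]
    exact Measure.rnDeriv_withDensity _ hmg
  -- the main integral computation
  have hInt : ∫ a, ((gaussianMechanism f σ x).rnDeriv (gaussianMechanism f σ y) a).toReal ^ α
        ∂(gaussianMechanism f σ y)
      = Real.exp (α * (α - 1) * (∑ i, (f x i - f y i) ^ 2) / (2 * σ ^ 2)) := by
    rw [integral_congr_ae (by filter_upwards [hrn] with a ha; rw [ha] :
      (fun a => ((gaussianMechanism f σ x).rnDeriv (gaussianMechanism f σ y) a).toReal ^ α)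
        =ᵐ[gaussianMechanism f σ y] fun a => (g a).toReal ^ α)]
    set nQ : (Fin r → ℝ) → ℝ≥0 := fun a => (∏ i, gaussianPDFReal (f y i) v (a i)).toNNReal
      with hnQ
    have hmnQ : Measurable nQ :=
      (Finset.measurable_prod _ fun i _ =>
        (measurable_gaussianPDFReal _ _).comp (measurable_pi_apply i)).real_toNNReal
    have hQ' : gaussianMechanism f σ y = volpi.withDensity (fun a => (nQ a : ℝ≥0∞)) := by
      rw [hQ]
      congr 1
      funext a
      rw [hdQ, hnQ]
      simp only [gaussianPDF]
      rw [← ENNReal.ofReal_prod_of_nonneg fun i _ => gaussianPDFReal_nonneg _ _ _]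
      rfl
    rw [hQ', integral_withDensity_eq_integral_smul hmnQ]
    have hpt : ∀ a : Fin r → ℝ, nQ a • ((g a).toReal ^ α)
        = ∏ i, ((gaussianPDFReal (f x i) v (a i) / gaussianPDFReal (f y i) v (a i)) ^ α
            * gaussianPDFReal (f y i) v (a i)) := by
      intro a
      have hPa : (0:ℝ) ≤ ∏ i, gaussianPDFReal (f x i) v (a i) :=
        Finset.prod_nonneg fun i _ => gaussianPDFReal_nonneg _ _ _
      have hQa : (0:ℝ) < ∏ i, gaussianPDFReal (f y i) v (a i) :=
        Finset.prod_pos fun i _ => gaussianPDFReal_pos _ _ _ hv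
      have hga : (g a).toReal
          = (∏ i, gaussianPDFReal (f x i) v (a i)) / (∏ i, gaussianPDFReal (f y i) v (a i)) := by
        rw [hg_def, hdP, hdQ]
        simp only [gaussianPDF]
        rw [← ENNReal.ofReal_prod_of_nonneg fun i _ => gaussianPDFReal_nonneg _ _ _,
          ← ENNReal.ofReal_prod_of_nonneg fun i _ => gaussianPDFReal_nonneg _ _ _,
          ENNReal.toReal_div, ENNReal.toReal_ofReal hPa, ENNReal.toReal_ofReal hQa.le]
      rw [hga, hnQ]
      rw [Finset.prod_mul_distrib,
        Real.finset_prod_rpow _ _ (fun i _ => div_nonneg (gaussianPDFReal_nonneg _ _ _) (gaussianPDFReal_nonneg _ _ _)) α,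
        ← Finset.prod_div_distrib]
      have : (nQ a : ℝ) = ∏ i, gaussianPDFReal (f y i) v (a i) := Real.coe_toNNReal _ hQa.le
      rw [NNReal.smul_def, smul_eq_mul]
      rw [hnQ] at this
      rw [this, mul_comm]
    rw [integral_congr_ae (ae_of_all _ hpt), hvolpi,
      integral_fintype_prod_eq_prod
        (fun i t => (gaussianPDFReal (f x i) v t / gaussianPDFReal (f y i) v t) ^ α
          * gaussianPDFReal (f y i) v t)]
    rw [Finset.prod_congr rfl fun i _ => one_dim_renyi α (f x i) (f y i) hv]
    rw [← Real.exp_sum]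
    congr 1
    simp_rw [hvR]
    rw [← Finset.sum_div, ← Finset.mul_sum]
  -- conclude
  rw [renyiDiv, hInt, Real.log_exp]
  have hα1 : (0:ℝ) < α - 1 := by linarith
  have hS : (∑ i, (f x i - f y i) ^ 2) ≤ Δ ^ 2 := by
    have h1 : ‖f x - f y‖ ≤ Δ := hΔ x y hxy
    have h0 : (0:ℝ) ≤ ‖f x - f y‖ := norm_nonneg _
    have h2 : ‖f x - f y‖ ^ 2 ≤ Δ ^ 2 := by nlinarith
    have h3 : ‖f x - f y‖ ^ 2 = ∑ i, (f x i - f y i) ^ 2 := by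
      rw [EuclideanSpace.norm_eq, Real.sq_sqrt (Finset.sum_nonneg fun i _ => by positivity)]
      exact Finset.sum_congr rfl fun i _ => by
        rw [Real.norm_eq_abs, sq_abs]
        simp [PiLp.sub_apply]
    linarith [h3 ▸ h2]
  have hS0 : (0:ℝ) ≤ ∑ i, (f x i - f y i) ^ 2 :=
    Finset.sum_nonneg fun i _ => by positivity
  rw [show (1 / (α - 1)) * (α * (α - 1) * (∑ i, (f x i - f y i) ^ 2) / (2 * σ ^ 2))
      = α * (∑ i, (f x i - f y i) ^ 2) / (2 * σ ^ 2) by field_simp]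
  gcongr
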